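/- Let n ≥ 1 and R ≥ 13. Let y be a Perron number whose minimal polynomial over ℚ has degree n, with R/2 ≤ y ≤ R, and such that every Galois conjugate μ ≠ y of y satisfies |μ| < R/3. Let λ = (y + √(y² − 4))/2 be the larger real root of X² − yX + 1. Then λ is a bi-Perron algebraic unit, 1 < λ ≤ R, and λ is a root of a monic palindromic polynomial in ℤ[X] of degree 2n. -/

import Mathlib

/-!
Since `λ + λ⁻¹ = y`, `λ` is a root of `X ^ n * q (X + X⁻¹)`, where `q` is the minimal polynomial
of `y`; this polynomial is monic and palindromic of degree `2n`. Every conjugate `μ` of `λ` is a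
root of it as well, so `μ + μ⁻¹` is a conjugate of `y`. Either `μ + μ⁻¹ = y`, and then
`μ ∈ {λ, λ⁻¹}`, or `|μ + μ⁻¹| < R / 3`, and then both `|μ|` and `|μ|⁻¹` are at most
`|μ + μ⁻¹| + 1 < R / 3 + 1 ≤ λ`.
-/

open Polynomial

/-- A Perron number: a real algebraic integer `λ > 1` all of whose Galois conjugates
`μ ≠ λ` satisfy `|μ| < λ`. -/
def IsPerronNumber (l : ℝ) : Prop :=
  1 < l ∧ IsIntegral ℤ l ∧
    ∀ μ ∈ (minpoly ℚ l).aroots ℂ, μ ≠ (l : ℂ) → ‖μ‖ < l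

/-- A bi-Perron algebraic unit: a real algebraic unit `λ > 1` all of whose Galois
conjugates `μ` satisfy `1/λ ≤ |μ| ≤ λ`. -/
def IsBiPerronUnit (l : ℝ) : Prop :=
  1 < l ∧ IsIntegral ℤ l ∧ IsIntegral ℤ l⁻¹ ∧
    ∀ μ ∈ (minpoly ℚ l).aroots ℂ, 1 / l ≤ ‖μ‖ ∧ ‖μ‖ ≤ l

namespace Polynomial

section PalindromicLift

variable {R : Type*} [CommSemiring R]

/-- `X ^ n * q (X + X⁻¹)`, with the negative powers of `X` cleared. -/
noncomputable def palindromicLift (q : R[X]) (n : ℕ) : R[X] :=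
  ∑ k ∈ Finset.range (n + 1), C (q.coeff k) * X ^ (n - k) * (X ^ 2 + 1) ^ k

lemma natDegree_X_sq_add_one_le : (X ^ 2 + 1 : R[X]).natDegree ≤ 2 := by
  compute_degree

lemma reflect_X_sq_add_one_pow (k : ℕ) :
    reflect (2 * k) ((X ^ 2 + 1 : R[X]) ^ k) = (X ^ 2 + 1) ^ k := by
  induction k with
  | zero => simp
  | succ k ih =>
    have hk : ((X ^ 2 + 1 : R[X]) ^ k).natDegree ≤ 2 * k := by
      simpa [mul_comm] using natDegree_pow_le_of_le k natDegree_X_sq_add_one_le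
    rw [mul_add_one, pow_succ, reflect_mul _ _ hk natDegree_X_sq_add_one_le, ih]
    simp [reflect_add, reflect_monomial, reflect_one, add_comm]

lemma reflect_C_mul_X_pow_mul_X_sq_add_one_pow {n k : ℕ} (hk : k ≤ n) (c : R) :
    reflect (2 * n) (C c * X ^ (n - k) * (X ^ 2 + 1) ^ k) =
      C c * X ^ (n - k) * (X ^ 2 + 1) ^ k := by
  have hdeg : ((X ^ 2 + 1 : R[X]) ^ k).natDegree ≤ 2 * k := by
    simpa [mul_comm] using natDegree_pow_le_of_le k natDegree_X_sq_add_one_le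
  rw [show 2 * n = 2 * (n - k) + 2 * k by omega,
    reflect_mul _ _ (natDegree_C_mul_X_pow_le c (n - k) |>.trans (by omega)) hdeg,
    reflect_C_mul_X_pow, reflect_X_sq_add_one_pow, revAt_le (by omega)]
  congr 3
  omega

lemma reflect_palindromicLift (q : R[X]) (n : ℕ) :
    reflect (2 * n) (palindromicLift q n) = palindromicLift q n := by
  let reflectHom : R[X] →+ R[X] := ⟨⟨reflect (2 * n), reflect_zero⟩, fun f g => reflect_add f g _⟩
  refine (map_sum reflectHom (fun k => C (q.coeff k) * X ^ (n - k) * (X ^ 2 + 1) ^ k)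
    (Finset.range (n + 1))).trans (Finset.sum_congr rfl fun k hk => ?_)
  exact reflect_C_mul_X_pow_mul_X_sq_add_one_pow (Nat.lt_succ_iff.mp (Finset.mem_range.mp hk)) _

lemma degree_C_mul_X_pow_mul_X_sq_add_one_pow_lt {n k : ℕ} (hk : k < n) (c : R) :
    (C c * X ^ (n - k) * (X ^ 2 + 1) ^ k).degree < ((2 * n : ℕ) : WithBot ℕ) := by
  have hdeg : (C c * X ^ (n - k) * (X ^ 2 + 1) ^ k).natDegree ≤ n + k := by
    compute_degree
    omega
  exact degree_le_natDegree.trans_lt (by exact_mod_cast hdeg.trans_lt (by omega))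

lemma palindromicLift_eq_X_sq_add_one_pow_add {q : R[X]} {n : ℕ} (hq : q.Monic)
    (hqn : q.natDegree = n) :
    palindromicLift q n = (X ^ 2 + 1) ^ n +
      ∑ k ∈ Finset.range n, C (q.coeff k) * X ^ (n - k) * (X ^ 2 + 1) ^ k := by
  rw [palindromicLift, Finset.sum_range_succ, add_comm, ← hqn, hq.coeff_natDegree]
  simp

lemma monic_X_sq_add_one : (X ^ 2 + 1 : R[X]).Monic := by
  simpa using monic_X_pow_add_C (1 : R) two_ne_zero

variable [Nontrivial R] {q : R[X]} {n : ℕ}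

lemma degree_X_sq_add_one_pow : ((X ^ 2 + 1 : R[X]) ^ n).degree = (2 * n : ℕ) := by
  have h2 : (X ^ 2 + 1 : R[X]).natDegree = 2 := by compute_degree!
  rw [degree_eq_natDegree (monic_X_sq_add_one.pow n).ne_zero, monic_X_sq_add_one.natDegree_pow,
    h2, mul_comm]

lemma degree_palindromicLift_sub_lt :
    (∑ k ∈ Finset.range n, C (q.coeff k) * X ^ (n - k) * (X ^ 2 + 1) ^ k).degree <
      ((X ^ 2 + 1 : R[X]) ^ n).degree := by
  rw [degree_X_sq_add_one_pow]
  refine (degree_sum_le _ _).trans_lt ((Finset.sup_lt_iff (WithBot.bot_lt_coe _)).mpr ?_)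
  exact fun k hk => degree_C_mul_X_pow_mul_X_sq_add_one_pow_lt (Finset.mem_range.mp hk) _

lemma monic_palindromicLift (hq : q.Monic) (hqn : q.natDegree = n) :
    (palindromicLift q n).Monic := by
  rw [palindromicLift_eq_X_sq_add_one_pow_add hq hqn]
  exact (monic_X_sq_add_one.pow n).add_of_left degree_palindromicLift_sub_lt

lemma natDegree_palindromicLift (hq : q.Monic) (hqn : q.natDegree = n) :
    (palindromicLift q n).natDegree = 2 * n := by
  rw [palindromicLift_eq_X_sq_add_one_pow_add hq hqn,
    natDegree_add_eq_left_of_degree_lt degree_palindromicLift_sub_lt]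
  exact natDegree_eq_of_degree_eq_some degree_X_sq_add_one_pow

lemma reverse_palindromicLift (hq : q.Monic) (hqn : q.natDegree = n) :
    (palindromicLift q n).reverse = palindromicLift q n := by
  rw [reverse, natDegree_palindromicLift hq hqn, reflect_palindromicLift]

lemma coeff_zero_palindromicLift (hq : q.Monic) (hqn : q.natDegree = n) :
    (palindromicLift q n).coeff 0 = 1 := by
  rw [← reverse_palindromicLift hq hqn, coeff_zero_reverse, (monic_palindromicLift hq hqn)]

end PalindromicLift

lemma aeval_palindromicLift {R K : Type*} [CommSemiring R] [Field K] [Algebra R K] {q : R[X]}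
    {n : ℕ} (hqn : q.natDegree ≤ n) {x : K} (hx : x ≠ 0) :
    aeval x (palindromicLift q n) = x ^ n * aeval (x + x⁻¹) q := by
  rw [aeval_eq_sum_range' (Nat.lt_succ_of_le hqn), palindromicLift, map_sum, Finset.mul_sum]
  refine Finset.sum_congr rfl fun k hk => ?_
  obtain ⟨m, rfl⟩ := Nat.exists_eq_add_of_le' (Nat.lt_succ_iff.mp (Finset.mem_range.mp hk))
  have hmul : x ^ k * (x + x⁻¹) ^ k = (x ^ 2 + 1) ^ k := by
    rw [← mul_pow]
    field_simp
  simp only [map_mul, aeval_C, map_pow, aeval_X, map_add, map_one, Algebra.smul_def,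
    Nat.add_sub_cancel, pow_add, ← hmul]
  ring

lemma ne_zero_of_aeval_palindromicLift_eq_zero {R K : Type*} [CommSemiring R] [Nontrivial R]
    [Field K] [Algebra R K] {q : R[X]} {n : ℕ} (hq : q.Monic) (hqn : q.natDegree = n) {x : K}
    (hx : aeval x (palindromicLift q n) = 0) : x ≠ 0 := by
  rintro rfl
  simp [aeval_def, eval₂_at_zero, coeff_zero_palindromicLift hq hqn] at hx

end Polynomial

lemma norm_le_norm_add_inv_add_one {K : Type*} [NormedDivisionRing K] (x : K) :
    ‖x‖ ≤ ‖x + x⁻¹‖ + 1 := by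
  rcases le_or_gt ‖x‖ 1 with h | h
  · linarith [norm_nonneg (x + x⁻¹)]
  calc ‖x‖ = ‖(x + x⁻¹) - x⁻¹‖ := by rw [add_sub_cancel_right]
    _ ≤ ‖x + x⁻¹‖ + ‖x⁻¹‖ := norm_sub_le _ _
    _ ≤ ‖x + x⁻¹‖ + 1 := by rw [norm_inv]; gcongr; exact inv_le_one_of_one_le₀ h.le

lemma one_div_le_norm_and_norm_le_of_norm_add_inv_add_one_le {K : Type*} [NormedDivisionRing K]
    {x : K} (hx : x ≠ 0) {l : ℝ} (h : ‖x + x⁻¹‖ + 1 ≤ l) : 1 / l ≤ ‖x‖ ∧ ‖x‖ ≤ l := by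
  have hinv : ‖x⁻¹‖ ≤ l :=
    (norm_le_norm_add_inv_add_one x⁻¹).trans (by rwa [inv_inv, add_comm x⁻¹])
  rw [norm_inv] at hinv
  exact ⟨one_div l ▸ inv_le_of_inv_le₀ (norm_pos_iff.mpr hx) hinv,
    (norm_le_norm_add_inv_add_one x).trans h⟩

lemma eq_or_eq_inv_of_add_inv_eq_add_inv {K : Type*} [Field K] {x l : K} (hx : x ≠ 0)
    (hl : l ≠ 0) (h : x + x⁻¹ = l + l⁻¹) : x = l ∨ x = l⁻¹ := by
  have hprod : (x - l) * (x - l⁻¹) = 0 := by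
    linear_combination x * h - mul_inv_cancel₀ hx + mul_inv_cancel₀ hl
  simpa [sub_eq_zero] using hprod

lemma one_div_le_norm_and_norm_le_of_add_inv_eq {l : ℝ} (hl : 1 ≤ l) {μ : ℂ} (hμ : μ ≠ 0)
    (h : μ + μ⁻¹ = l + (l : ℂ)⁻¹) : 1 / l ≤ ‖μ‖ ∧ ‖μ‖ ≤ l := by
  have hl0 : 0 < l := zero_lt_one.trans_le hl
  rcases eq_or_eq_inv_of_add_inv_eq_add_inv hμ (by exact_mod_cast hl0.ne') h with rfl | rfl
  · simp only [Complex.norm_real, Real.norm_of_nonneg hl0.le]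
    exact ⟨(div_le_one hl0).mpr hl |>.trans hl, le_rfl⟩
  · simp only [norm_inv, Complex.norm_real, Real.norm_of_nonneg hl0.le, one_div]
    exact ⟨le_rfl, (inv_le_one_of_one_le₀ hl).trans hl⟩

lemma add_sqrt_sq_sub_four_div_two_add_inv {y : ℝ} (hy : 2 ≤ y) :
    (y + √(y ^ 2 - 4)) / 2 + ((y + √(y ^ 2 - 4)) / 2)⁻¹ = y := by
  have hs := Real.sq_sqrt (by nlinarith : 0 ≤ y ^ 2 - 4)
  have hl : (y + √(y ^ 2 - 4)) / 2 ≠ 0 := by positivity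
  field_simp
  linear_combination hs

lemma one_lt_add_sqrt_sq_sub_four_div_two {y : ℝ} (hy : 2 < y) : 1 < (y + √(y ^ 2 - 4)) / 2 := by
  have : 0 < √(y ^ 2 - 4) := Real.sqrt_pos.mpr (by nlinarith)
  linarith

lemma aeval_eq_zero_of_mem_aroots_minpoly {A L : Type*} [Ring A] [Algebra ℚ A] [Field L]
    [CharZero L] {x : A} {p : ℤ[X]} (hp : aeval x p = 0) {μ : L}
    (hμ : μ ∈ (minpoly ℚ x).aroots L) : aeval μ p = 0 := by
  rw [← aeval_map_algebraMap ℚ] at hp ⊢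
  exact aeval_eq_zero_of_dvd_aeval_eq_zero (minpoly.dvd ℚ x hp) (mem_aroots.mp hμ).2

lemma ne_zero_and_add_inv_mem_aroots_minpoly {A L : Type*} [CommRing A] [IsDomain A]
    [Algebra ℚ A] [Field L] [CharZero L] {x y : A} {n : ℕ} (hy : IsIntegral ℤ y)
    (hn : (minpoly ℤ y).natDegree = n) (hx : aeval x (palindromicLift (minpoly ℤ y) n) = 0)
    {μ : L} (hμ : μ ∈ (minpoly ℚ x).aroots L) : μ ≠ 0 ∧ μ + μ⁻¹ ∈ (minpoly ℚ y).aroots L := by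
  have hq := minpoly.monic hy
  have hPμ := aeval_eq_zero_of_mem_aroots_minpoly hx hμ
  have hμ0 := ne_zero_of_aeval_palindromicLift_eq_zero hq hn hPμ
  rw [aeval_palindromicLift hn.le hμ0] at hPμ
  refine ⟨hμ0, ?_⟩
  rw [minpoly.isIntegrallyClosed_eq_field_fractions' ℚ hy, mem_aroots, aeval_map_algebraMap]
  exact ⟨(hq.map _).ne_zero, (mul_eq_zero.mp hPμ).resolve_left (pow_ne_zero _ hμ0)⟩

theorem biPerron_from_perron_general (n : ℕ) (R : ℝ) (hR : 13 ≤ R)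
    (y : ℝ) (hy : IsPerronNumber y) (hdeg : (minpoly ℚ y).natDegree = n)
    (hy1 : R / 2 ≤ y) (hy2 : y ≤ R)
    (hconj : ∀ μ ∈ (minpoly ℚ y).aroots ℂ, μ ≠ (y : ℂ) → ‖μ‖ < R / 3) :
    IsBiPerronUnit ((y + Real.sqrt (y ^ 2 - 4)) / 2) ∧
    1 < (y + Real.sqrt (y ^ 2 - 4)) / 2 ∧
    (y + Real.sqrt (y ^ 2 - 4)) / 2 ≤ R ∧
    ∃ p : Polynomial ℤ, p.Monic ∧ p.reverse = p ∧ p.natDegree = 2 * n ∧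
      Polynomial.aeval ((y + Real.sqrt (y ^ 2 - 4)) / 2) p = 0 := by
  obtain ⟨-, hyint, -⟩ := hy
  set l := (y + √(y ^ 2 - 4)) / 2
  have hl1 : 1 < l := one_lt_add_sqrt_sq_sub_four_div_two (by linarith)
  have hly : l + l⁻¹ = y := add_sqrt_sq_sub_four_div_two_add_inv (by linarith)
  have hlR : l ≤ R := by linarith [inv_pos.mpr (zero_lt_one.trans hl1)]
  have hRl : R / 3 + 1 ≤ l := by linarith [inv_lt_one_of_one_lt₀ hl1]
  set q := minpoly ℤ y
  have hq : q.Monic := minpoly.monic hyint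
  have hqn : q.natDegree = n := by
    rwa [minpoly.isIntegrallyClosed_eq_field_fractions' ℚ hyint, hq.natDegree_map] at hdeg
  set P := palindromicLift q n
  have hPl : aeval l P = 0 := by
    rw [aeval_palindromicLift hqn.le (by positivity), hly, minpoly.aeval, mul_zero]
  have hlint : IsIntegral ℤ l := ⟨P, monic_palindromicLift hq hqn, by rwa [← aeval_def]⟩
  refine ⟨⟨hl1, hlint, eq_sub_of_add_eq' hly ▸ hyint.sub hlint, fun μ hμ => ?_⟩, hl1, hlR,
    P, monic_palindromicLift hq hqn, reverse_palindromicLift hq hqn,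
    natDegree_palindromicLift hq hqn, hPl⟩
  obtain ⟨hμ0, hμ_conj⟩ := ne_zero_and_add_inv_mem_aroots_minpoly hyint hqn hPl hμ
  by_cases hμy : μ + μ⁻¹ = y
  · exact one_div_le_norm_and_norm_le_of_add_inv_eq hl1.le hμ0
      (by rw [hμy, ← hly, Complex.ofReal_add, Complex.ofReal_inv])
  · exact one_div_le_norm_and_norm_le_of_norm_add_inv_add_one_le hμ0
      (by linarith [hconj _ hμ_conj hμy])

/-- If `y` is a Perron number of degree `n` with `R/2 ≤ y ≤ R`, `R ≥ 13`,
whose Galois conjugates `μ ≠ y` satisfy `|μ| < R/3`, then `λ = (y + √(y² − 4))/2` (the larger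
real root of `X² − yX + 1`) is a bi-Perron algebraic unit with `1 < λ ≤ R`, and `λ` is a root
of a monic palindromic integer polynomial of degree `2n`. -/
theorem biPerron_from_perron (n : ℕ) (hn : 1 ≤ n) (R : ℝ) (hR : 13 ≤ R)
    (y : ℝ) (hy : IsPerronNumber y) (hdeg : (minpoly ℚ y).natDegree = n)
    (hy1 : R / 2 ≤ y) (hy2 : y ≤ R)
    (hconj : ∀ μ ∈ (minpoly ℚ y).aroots ℂ, μ ≠ (y : ℂ) → ‖μ‖ < R / 3) :
    IsBiPerronUnit ((y + Real.sqrt (y ^ 2 - 4)) / 2) ∧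
    1 < (y + Real.sqrt (y ^ 2 - 4)) / 2 ∧
    (y + Real.sqrt (y ^ 2 - 4)) / 2 ≤ R ∧
    ∃ p : Polynomial ℤ, p.Monic ∧ p.reverse = p ∧ p.natDegree = 2 * n ∧
      Polynomial.aeval ((y + Real.sqrt (y ^ 2 - 4)) / 2) p = 0 :=
  biPerron_from_perron_general n R hR y hy hdeg hy1 hy2 hconj
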